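/- arXiv:2603.10941 — 4 statements merged into one kernel-verified Lean document; each statement's English description precedes it below -/
import Mathlib

section
/- Let Z be uniform on (0,1) and suppose the conditional copula of (X,Y) given Z = z is the Farlie–Gumbel–Morgenstern copula C_{X,Y|Z=z}(x,y) = xy + (2z−1)·x·y·(1−x)·(1−y). Then the partial copula C_{X,Y;Z}(x,y) = ∫₀¹ C_{X,Y|Z=z}(x,y) dz = xy is the independence copula, even though C_{X,Y|Z=z} differs from the independence copula for every z ≠ 1/2. Hence independence of the Rosenblatt transforms does not imply conditional independence. -/
open MeasureTheory Set

/-- FGM counterexample: with `Z ~ U(0,1)` and conditional copulas the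
Farlie–Gumbel–Morgenstern copulas with parameter `2z - 1`, the partial copula
(the average of the conditional copulas over `z ∈ (0,1)`) is the independence copula,
although for every `z ≠ 1/2` the conditional copula differs from the independence
copula somewhere on `(0,1)²`. -/
theorem fgm_partial_copula_independence :
    (∀ x ∈ Icc (0:ℝ) 1, ∀ y ∈ Icc (0:ℝ) 1,
      (∫ z in Ioo (0:ℝ) 1, (x * y + (2 * z - 1) * x * y * (1 - x) * (1 - y))) = x * y)
    ∧
    (∀ z ∈ Ioo (0:ℝ) 1, z ≠ 1 / 2 →
      ∃ x ∈ Ioo (0:ℝ) 1, ∃ y ∈ Ioo (0:ℝ) 1,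
        x * y + (2 * z - 1) * x * y * (1 - x) * (1 - y) ≠ x * y) := by
  constructor
  · intro x hx y hy
    rw [← MeasureTheory.integral_Ioc_eq_integral_Ioo,
      ← intervalIntegral.integral_of_le (by norm_num : (0:ℝ) ≤ 1)]
    have : ∀ z : ℝ, x * y + (2 * z - 1) * x * y * (1 - x) * (1 - y)
        = (x * y - x * y * (1 - x) * (1 - y)) + z * (2 * x * y * (1 - x) * (1 - y)) := by
      intro z; ring
    simp_rw [this]
    rw [intervalIntegral.integral_add (intervalIntegrable_const)
      ((intervalIntegral.intervalIntegrable_id).mul_const _),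
      intervalIntegral.integral_const, intervalIntegral.integral_mul_const,
      integral_id, smul_eq_mul]
    ring
  · intro z hz hz2
    refine ⟨1/2, by norm_num, 1/2, by norm_num, ?_⟩
    intro h
    apply hz2
    nlinarith [h]
end

section
/- Let X, Y, Z be jointly continuous random variables with partial copula C_{X,Y;Z}, and let (U_X, U_Y) be the Rosenblatt transforms with joint CDF C_{X,Y;Z}. If D(C_{X,Y|Z=z}) ≤ k for all z, then Kendall's tau of the partial copula, τ = 4·E[C_{X,Y;Z}(U_X, U_Y)] − 1, satisfies max(−1, −2k) ≤ τ ≤ min(1, 2k). -/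
open MeasureTheory ProbabilityTheory Set

/-- Kolmogorov distance dependence of a bivariate function on the unit square. -/
noncomputable def KDD (C : ℝ → ℝ → ℝ) : ℝ :=
  4 * ⨆ p : Icc (0:ℝ) 1 × Icc (0:ℝ) 1, |C p.1 p.2 - (p.1 : ℝ) * (p.2 : ℝ)|

/-- If the Kolmogorov distance dependence of every conditional copula is at most `k`,
then Kendall's tau of the partial copula, `τ = 4 E[C_{X,Y;Z}(U_X,U_Y)] - 1` where
`(U_X,U_Y)` are the Rosenblatt transforms with joint CDF the partial copula
`C_{X,Y;Z}(x,y) = ∫ C z x y * fZ z dz`, satisfies `max(-1,-2k) ≤ τ ≤ min(1,2k)`. -/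
theorem kendall_tau_partial_copula_bound
    {Ω : Type*} [MeasureSpace Ω] [IsProbabilityMeasure (ℙ : Measure Ω)]
    (C : ℝ → ℝ → ℝ → ℝ)  -- conditional copulas of (X,Y) given Z = z
    (fZ : ℝ → ℝ)          -- density of Z
    (hf0 : ∀ z, 0 ≤ fZ z) (hfi : Integrable fZ) (hf1 : ∫ z, fZ z = 1)
    (hCbd : ∀ z, ∀ x ∈ Icc (0:ℝ) 1, ∀ y ∈ Icc (0:ℝ) 1, C z x y ∈ Icc (0:ℝ) 1)
    (hCmeas : ∀ x ∈ Icc (0:ℝ) 1, ∀ y ∈ Icc (0:ℝ) 1, Measurable fun z => C z x y)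
    (k : ℝ) (hk : ∀ z, KDD (C z) ≤ k)
    (UX UY : Ω → ℝ) (hUX : Measurable UX) (hUY : Measurable UY)
    -- the Rosenblatt transforms (U_X, U_Y) have joint CDF equal to the partial copula:
    (hUV : ∀ x ∈ Icc (0:ℝ) 1, ∀ y ∈ Icc (0:ℝ) 1,
      ((ℙ : Measure Ω) {ω | UX ω ≤ x ∧ UY ω ≤ y}).toReal = ∫ z, C z x y * fZ z)
    (hUXuni : (ℙ : Measure Ω).map UX = volume.restrict (Icc (0:ℝ) 1))
    (hUYuni : (ℙ : Measure Ω).map UY = volume.restrict (Icc (0:ℝ) 1)) :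
    max (-1) (-2 * k) ≤ 4 * (∫ ω, (∫ z, C z (UX ω) (UY ω) * fZ z)) - 1
    ∧ 4 * (∫ ω, (∫ z, C z (UX ω) (UY ω) * fZ z)) - 1 ≤ min 1 (2 * k) := by
  -- pointwise KDD bound
  have hCk : ∀ z, ∀ x ∈ Icc (0:ℝ) 1, ∀ y ∈ Icc (0:ℝ) 1, |C z x y - x * y| ≤ k / 4 := by
    intro z x hx y hy
    have hbdd : BddAbove (Set.range fun p : Icc (0:ℝ) 1 × Icc (0:ℝ) 1 =>
        |C z p.1 p.2 - (p.1 : ℝ) * (p.2 : ℝ)|) := by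
      refine ⟨1, ?_⟩
      rintro _ ⟨p, rfl⟩
      have h1 := hCbd z p.1 p.1.2 p.2 p.2.2
      have h2 : (0:ℝ) ≤ (p.1 : ℝ) * (p.2 : ℝ) := mul_nonneg p.1.2.1 p.2.2.1
      have h3 : (p.1 : ℝ) * (p.2 : ℝ) ≤ 1 := mul_le_one₀ p.1.2.2 p.2.2.1 p.2.2.2
      rw [abs_sub_le_iff]
      constructor <;> linarith [h1.1, h1.2]
    have hle := le_ciSup hbdd (⟨⟨x, hx⟩, ⟨y, hy⟩⟩ : Icc (0:ℝ) 1 × Icc (0:ℝ) 1)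
    have hkz := hk z
    unfold KDD at hkz
    simp only at hle
    linarith
  have hk0 : 0 ≤ k := by
    have h := hCk 0 0 ⟨le_refl 0, zero_le_one⟩ 0 ⟨le_refl 0, zero_le_one⟩
    rw [mul_zero, sub_zero] at h
    linarith [abs_nonneg (C 0 0 0)]
  -- integrability of z ↦ C z x y * fZ z
  have hCint : ∀ x ∈ Icc (0:ℝ) 1, ∀ y ∈ Icc (0:ℝ) 1,
      Integrable (fun z => C z x y * fZ z) := by
    intro x hx y hy
    refine hfi.mono' ((hCmeas x hx y hy).aestronglyMeasurable.mul hfi.1) ?_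
    filter_upwards with z
    have h1 := hCbd z x hx y hy
    rw [Real.norm_eq_abs, abs_mul, abs_of_nonneg h1.1, abs_of_nonneg (hf0 z)]
    exact mul_le_of_le_one_left (hf0 z) h1.2
  -- the partial copula is within k/4 of the product copula
  have hFbd : ∀ x ∈ Icc (0:ℝ) 1, ∀ y ∈ Icc (0:ℝ) 1,
      |(∫ z, C z x y * fZ z) - x * y| ≤ k / 4 := by
    intro x hx y hy
    have hint1 := hCint x hx y hy
    have hint2 : Integrable (fun z => x * y * fZ z) := hfi.const_mul _
    have hsub : Integrable (fun z => (C z x y - x * y) * fZ z) := by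
      have := hint1.sub hint2
      refine this.congr ?_
      filter_upwards with z
      simp only [Pi.sub_apply]
      ring
    have heq : (∫ z, C z x y * fZ z) - x * y = ∫ z, (C z x y - x * y) * fZ z := by
      rw [show (fun z => (C z x y - x * y) * fZ z)
          = fun z => C z x y * fZ z - x * y * fZ z from funext fun z => by ring,
        integral_sub hint1 hint2, integral_const_mul, hf1, mul_one]
    rw [heq]
    calc |∫ z, (C z x y - x * y) * fZ z| ≤ ∫ z, |(C z x y - x * y) * fZ z| := by
          have hni := norm_integral_le_integral_norm (μ := volume)
            (fun z => (C z x y - x * y) * fZ z)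
          simp only [Real.norm_eq_abs] at hni
          exact hni
      _ ≤ ∫ z, k / 4 * fZ z := by
          refine integral_mono hsub.abs (hfi.const_mul _) fun z => ?_
          rw [abs_mul, abs_of_nonneg (hf0 z)]
          exact mul_le_mul_of_nonneg_right (hCk z x hx y hy) (hf0 z)
      _ = k / 4 := by rw [integral_const_mul, hf1, mul_one]
  -- a.e. membership in [0,1]
  have haeX : ∀ᵐ ω ∂(ℙ : Measure Ω), UX ω ∈ Icc (0:ℝ) 1 := by
    have h0 : (ℙ : Measure Ω) (UX ⁻¹' (Icc (0:ℝ) 1)ᶜ) = 0 := by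
      rw [← Measure.map_apply hUX measurableSet_Icc.compl, hUXuni,
        Measure.restrict_apply measurableSet_Icc.compl]
      simp
    rw [ae_iff]
    exact h0
  have haeY : ∀ᵐ ω ∂(ℙ : Measure Ω), UY ω ∈ Icc (0:ℝ) 1 := by
    have h0 : (ℙ : Measure Ω) (UY ⁻¹' (Icc (0:ℝ) 1)ᶜ) = 0 := by
      rw [← Measure.map_apply hUY measurableSet_Icc.compl, hUYuni,
        Measure.restrict_apply measurableSet_Icc.compl]
      simp
    rw [ae_iff]
    exact h0
  -- the joint CDF
  set m : ℝ → ℝ → ENNReal := fun x y => (ℙ : Measure Ω) {ω | UX ω ≤ x ∧ UY ω ≤ y} with hm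
  have hmmeas : Measurable fun p : ℝ × ℝ => m p.1 p.2 := by
    have hS : MeasurableSet {q : (ℝ × ℝ) × Ω | UX q.2 ≤ q.1.1 ∧ UY q.2 ≤ q.1.2} :=
      (measurableSet_le (hUX.comp measurable_snd) (measurable_fst.comp measurable_fst)).inter
        (measurableSet_le (hUY.comp measurable_snd) (measurable_snd.comp measurable_fst))
    exact measurable_measure_prodMk_left hS
  have hmne : ∀ x y, m x y ≠ ⊤ := fun x y => measure_ne_top _ _
  set F : ℝ → ℝ → ℝ := fun x y => (m x y).toReal with hF
  have hF01 : ∀ x y, F x y ∈ Icc (0:ℝ) 1 := by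
    intro x y
    refine ⟨ENNReal.toReal_nonneg, ?_⟩
    rw [hF]
    exact ENNReal.toReal_le_of_le_ofReal zero_le_one (by simpa using prob_le_one)
  have hFeq : ∀ x ∈ Icc (0:ℝ) 1, ∀ y ∈ Icc (0:ℝ) 1, F x y = ∫ z, C z x y * fZ z :=
    fun x hx y hy => hUV x hx y hy
  have hFbd' : ∀ x ∈ Icc (0:ℝ) 1, ∀ y ∈ Icc (0:ℝ) 1, |F x y - x * y| ≤ k / 4 := by
    intro x hx y hy
    rw [hFeq x hx y hy]
    exact hFbd x hx y hy
  -- marginal CDFs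
  have hmX : ∀ x ∈ Icc (0:ℝ) 1, (ℙ : Measure Ω) {ω | UX ω ≤ x} = ENNReal.ofReal x := by
    intro x hx
    rw [show {ω | UX ω ≤ x} = UX ⁻¹' Iic x from rfl,
      ← Measure.map_apply hUX measurableSet_Iic, hUXuni,
      Measure.restrict_apply measurableSet_Iic]
    rw [show Iic x ∩ Icc 0 1 = Icc 0 x from by
      ext t
      simp only [mem_inter_iff, mem_Iic, mem_Icc]
      constructor
      · rintro ⟨h1, h2, h3⟩; exact ⟨h2, h1⟩
      · rintro ⟨h1, h2⟩; exact ⟨h2, h1, le_trans h2 hx.2⟩]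
    rw [Real.volume_Icc, sub_zero]
  -- Frechet upper bound
  have hFle : ∀ x ∈ Icc (0:ℝ) 1, ∀ y ∈ Icc (0:ℝ) 1, F x y ≤ x := by
    intro x hx y hy
    have h1 : m x y ≤ ENNReal.ofReal x := by
      rw [← hmX x hx]
      exact measure_mono fun ω hω => hω.1
    rw [hF]
    calc (m x y).toReal ≤ (ENNReal.ofReal x).toReal :=
          ENNReal.toReal_mono ENNReal.ofReal_ne_top h1
      _ = x := ENNReal.toReal_ofReal hx.1
  have hmY : ∀ y ∈ Icc (0:ℝ) 1, (ℙ : Measure Ω) {ω | UY ω ≤ y} = ENNReal.ofReal y := by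
    intro y hy
    rw [show {ω | UY ω ≤ y} = UY ⁻¹' Iic y from rfl,
      ← Measure.map_apply hUY measurableSet_Iic, hUYuni,
      Measure.restrict_apply measurableSet_Iic]
    rw [show Iic y ∩ Icc 0 1 = Icc 0 y from by
      ext t
      simp only [mem_inter_iff, mem_Iic, mem_Icc]
      constructor
      · rintro ⟨h1, h2, h3⟩; exact ⟨h2, h1⟩
      · rintro ⟨h1, h2⟩; exact ⟨h2, h1, le_trans h2 hy.2⟩]
    rw [Real.volume_Icc, sub_zero]
  have hFle' : ∀ x ∈ Icc (0:ℝ) 1, ∀ y ∈ Icc (0:ℝ) 1, F x y ≤ y := by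
    intro x hx y hy
    have h1 : m x y ≤ ENNReal.ofReal y := by
      rw [← hmY y hy]
      exact measure_mono fun ω hω => hω.2
    rw [hF]
    calc (m x y).toReal ≤ (ENNReal.ofReal y).toReal :=
          ENNReal.toReal_mono ENNReal.ofReal_ne_top h1
      _ = y := ENNReal.toReal_ofReal hy.1
  -- the a.e. version of the Kendall integrand
  set h : Ω → ℝ := fun ω => F (UX ω) (UY ω) with hh
  have hhmeas : Measurable h := (ENNReal.measurable_toReal.comp hmmeas).comp (hUX.prodMk hUY)
  have hhint : Integrable h := by
    refine (integrable_const (1:ℝ)).mono' hhmeas.aestronglyMeasurable ?_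
    filter_upwards with ω
    rw [Real.norm_eq_abs, abs_of_nonneg (hF01 _ _).1]
    exact (hF01 _ _).2
  have hgint : ∫ ω, (∫ z, C z (UX ω) (UY ω) * fZ z) = ∫ ω, h ω := by
    refine integral_congr_ae ?_
    filter_upwards [haeX, haeY] with ω hx hy
    exact (hFeq _ hx _ hy).symm
  -- expectations of the marginals
  have hUXint : Integrable UX := by
    refine (integrable_const (1:ℝ)).mono' hUX.aestronglyMeasurable ?_
    filter_upwards [haeX] with ω hω
    rw [Real.norm_eq_abs, abs_of_nonneg hω.1]; exact hω.2
  have hUYint : Integrable UY := by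
    refine (integrable_const (1:ℝ)).mono' hUY.aestronglyMeasurable ?_
    filter_upwards [haeY] with ω hω
    rw [Real.norm_eq_abs, abs_of_nonneg hω.1]; exact hω.2
  have hEX : ∫ ω, UX ω = 1/2 := by
    have h1 : ∫ ω, UX ω ∂(ℙ : Measure Ω) = ∫ x, x ∂((ℙ : Measure Ω).map UX) :=
      (integral_map hUX.aemeasurable aestronglyMeasurable_id).symm
    rw [h1, hUXuni, MeasureTheory.integral_Icc_eq_integral_Ioc,
      ← intervalIntegral.integral_of_le (by norm_num : (0:ℝ) ≤ 1), integral_id]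
    norm_num
  have hEY : ∫ ω, UY ω = 1/2 := by
    have h1 : ∫ ω, UY ω ∂(ℙ : Measure Ω) = ∫ x, x ∂((ℙ : Measure Ω).map UY) :=
      (integral_map hUY.aemeasurable aestronglyMeasurable_id).symm
    rw [h1, hUYuni, MeasureTheory.integral_Icc_eq_integral_Ioc,
      ← intervalIntegral.integral_of_le (by norm_num : (0:ℝ) ≤ 1), integral_id]
    norm_num
  have hUVint : Integrable (fun ω => UX ω * UY ω) := by
    refine (integrable_const (1:ℝ)).mono' (hUX.mul hUY).aestronglyMeasurable ?_
    filter_upwards [haeX, haeY] with ω hx hy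
    rw [Real.norm_eq_abs, abs_mul, abs_of_nonneg hx.1, abs_of_nonneg hy.1]
    exact mul_le_one₀ hx.2 hy.1 hy.2
  have hprodeq : ∫ ω, (1 - UX ω) * (1 - UY ω) = ∫ ω, UX ω * UY ω := by
    have e : ∀ ω, (1 - UX ω) * (1 - UY ω) = 1 - UX ω - UY ω + UX ω * UY ω := fun ω => by ring
    simp_rw [e]
    have i0 : Integrable (fun ω => 1 - UX ω) (ℙ : Measure Ω) :=
      ((integrable_const (1:ℝ)).sub hUXint).congr (Filter.Eventually.of_forall fun ω => by simp)
    have i1 : Integrable (fun ω => 1 - UX ω - UY ω) (ℙ : Measure Ω) :=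
      (i0.sub hUYint).congr (Filter.Eventually.of_forall fun ω => by simp)
    rw [integral_add i1 hUVint, integral_sub i0 hUYint,
      integral_sub (integrable_const 1) hUXint, integral_const, hEX, hEY]
    simp
    norm_num
  -- the uniform measure on the square
  set ν : Measure ℝ := volume.restrict (Icc (0:ℝ) 1) with hν
  haveI hνprob : IsProbabilityMeasure ν := ⟨by
    rw [hν, Measure.restrict_apply_univ, Real.volume_Icc]; norm_num⟩
  set μ2 : Measure (ℝ × ℝ) := ν.prod ν with hμ2
  haveI hμ2prob : IsProbabilityMeasure μ2 := by rw [hμ2]; infer_instance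
  -- Tonelli
  set S : Set (Ω × (ℝ × ℝ)) := {q | UX q.1 ≤ q.2.1 ∧ UY q.1 ≤ q.2.2} with hSdef
  have hS : MeasurableSet S :=
    (measurableSet_le (hUX.comp measurable_fst) (measurable_fst.comp measurable_snd)).inter
      (measurableSet_le (hUY.comp measurable_fst) (measurable_snd.comp measurable_snd))
  have hSwap : ∫⁻ ω, μ2 (Ici (UX ω) ×ˢ Ici (UY ω)) ∂(ℙ : Measure Ω)
      = ∫⁻ p : ℝ × ℝ, m p.1 p.2 ∂μ2 := by
    have key := lintegral_lintegral_swap (μ := (ℙ : Measure Ω)) (ν := μ2)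
      (f := fun ω p => S.indicator 1 (ω, p))
      ((measurable_one.indicator hS).aemeasurable)
    have h1 : ∀ ω, (∫⁻ p : ℝ × ℝ, S.indicator 1 (ω, p) ∂μ2)
        = μ2 (Ici (UX ω) ×ˢ Ici (UY ω)) := by
      intro ω
      rw [show (fun p : ℝ × ℝ => S.indicator 1 (ω, p))
          = (Ici (UX ω) ×ˢ Ici (UY ω)).indicator (1 : ℝ × ℝ → ENNReal) from by
        ext p
        simp [Set.indicator_apply, hSdef, Set.mem_prod, Prod.le_def]]
      exact lintegral_indicator_one (measurableSet_Ici.prod measurableSet_Ici)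
    have h2 : ∀ p : ℝ × ℝ, (∫⁻ ω, S.indicator 1 (ω, p) ∂(ℙ : Measure Ω)) = m p.1 p.2 := by
      intro p
      have hms : MeasurableSet {ω | UX ω ≤ p.1 ∧ UY ω ≤ p.2} :=
        (measurableSet_le hUX measurable_const).inter (measurableSet_le hUY measurable_const)
      rw [show (fun ω => S.indicator 1 (ω, p))
          = Set.indicator {ω | UX ω ≤ p.1 ∧ UY ω ≤ p.2} (1 : Ω → ENNReal) from by
        ext ω
        simp [Set.indicator_apply, hSdef]]
      exact lintegral_indicator_one hms
    calc ∫⁻ ω, μ2 (Ici (UX ω) ×ˢ Ici (UY ω)) ∂(ℙ : Measure Ω)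
        = ∫⁻ ω, ∫⁻ p : ℝ × ℝ, S.indicator 1 (ω, p) ∂μ2 ∂(ℙ : Measure Ω) := by
          exact lintegral_congr fun ω => (h1 ω).symm
      _ = ∫⁻ p : ℝ × ℝ, ∫⁻ ω, S.indicator 1 (ω, p) ∂(ℙ : Measure Ω) ∂μ2 := key
      _ = ∫⁻ p : ℝ × ℝ, m p.1 p.2 ∂μ2 := lintegral_congr fun p => h2 p
  -- evaluate the inner product-measure
  have hIci : ∀ a : ℝ, a ∈ Icc (0:ℝ) 1 → ν (Ici a) = ENNReal.ofReal (1 - a) := by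
    intro a ha
    rw [hν, Measure.restrict_apply measurableSet_Ici]
    rw [show Ici a ∩ Icc 0 1 = Icc a 1 from by
      ext t
      simp only [mem_inter_iff, mem_Ici, mem_Icc]
      constructor
      · rintro ⟨h1', h2', h3'⟩; exact ⟨h1', h3'⟩
      · rintro ⟨h1', h2'⟩; exact ⟨h1', le_trans ha.1 h1', h2'⟩]
    rw [Real.volume_Icc]
  have hLHS : ∫⁻ ω, μ2 (Ici (UX ω) ×ˢ Ici (UY ω)) ∂(ℙ : Measure Ω)
      = ∫⁻ ω, ENNReal.ofReal ((1 - UX ω) * (1 - UY ω)) ∂(ℙ : Measure Ω) := by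
    refine lintegral_congr_ae ?_
    filter_upwards [haeX, haeY] with ω hx hy
    rw [hμ2, Measure.prod_prod, hIci _ hx, hIci _ hy,
      ENNReal.ofReal_mul (by linarith [hx.2])]
  -- convert to real integrals
  have hIF : ∫ ω, UX ω * UY ω = ∫ p : ℝ × ℝ, F p.1 p.2 ∂μ2 := by
    rw [← hprodeq]
    have hmeasp : AEStronglyMeasurable (fun ω => (1 - UX ω) * (1 - UY ω)) (ℙ : Measure Ω) :=
      ((measurable_const.sub hUX).mul (measurable_const.sub hUY)).aestronglyMeasurable
    have hnonneg : 0 ≤ᵐ[(ℙ : Measure Ω)] fun ω => (1 - UX ω) * (1 - UY ω) := by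
      filter_upwards [haeX, haeY] with ω hx hy
      exact mul_nonneg (by linarith [hx.2]) (by linarith [hy.2])
    have hFmeas2 : Measurable fun p : ℝ × ℝ => F p.1 p.2 :=
      ENNReal.measurable_toReal.comp hmmeas
    have hFnonneg : 0 ≤ᵐ[μ2] fun p : ℝ × ℝ => F p.1 p.2 :=
      Filter.Eventually.of_forall fun p => (hF01 _ _).1
    rw [integral_eq_lintegral_of_nonneg_ae hnonneg hmeasp,
      integral_eq_lintegral_of_nonneg_ae hFnonneg hFmeas2.aestronglyMeasurable]
    congr 1
    rw [← hLHS, hSwap]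
    refine lintegral_congr fun p => ?_
    rw [hF]
    rw [ENNReal.ofReal_toReal (hmne _ _)]
  -- a.e. membership for the square
  have hμ2mem : ∀ᵐ p ∂μ2, p.1 ∈ Icc (0:ℝ) 1 ∧ p.2 ∈ Icc (0:ℝ) 1 := by
    rw [hμ2, hν, Measure.prod_restrict]
    filter_upwards [ae_restrict_mem (measurableSet_Icc.prod measurableSet_Icc)] with p hp
    exact hp
  have hFmeas2 : Measurable fun p : ℝ × ℝ => F p.1 p.2 :=
    ENNReal.measurable_toReal.comp hmmeas
  have hFint2 : Integrable (fun p : ℝ × ℝ => F p.1 p.2) μ2 := by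
    refine (integrable_const (1:ℝ)).mono' hFmeas2.aestronglyMeasurable ?_
    filter_upwards with p
    rw [Real.norm_eq_abs, abs_of_nonneg (hF01 _ _).1]
    exact (hF01 _ _).2
  have hUVint2 : Integrable (fun p : ℝ × ℝ => p.1 * p.2) μ2 := by
    refine (integrable_const (1:ℝ)).mono' (measurable_fst.mul measurable_snd).aestronglyMeasurable ?_
    filter_upwards [hμ2mem] with p hp
    rw [Real.norm_eq_abs, abs_mul, abs_of_nonneg hp.1.1, abs_of_nonneg hp.2.1]
    exact mul_le_one₀ hp.1.2 hp.2.1 hp.2.2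
  have hνid : ∫ x, x ∂ν = 1/2 := by
    rw [hν, MeasureTheory.integral_Icc_eq_integral_Ioc,
      ← intervalIntegral.integral_of_le (by norm_num : (0:ℝ) ≤ 1), integral_id]
    norm_num
  have hEμ2 : ∫ p : ℝ × ℝ, p.1 * p.2 ∂μ2 = 1/4 := by
    rw [hμ2, integral_prod_mul (fun x : ℝ => x) (fun y : ℝ => y), hνid]
    norm_num
  -- the key bound on the square
  have hd1 : |(∫ p : ℝ × ℝ, F p.1 p.2 ∂μ2) - 1/4| ≤ k / 4 := by
    have he : (∫ p : ℝ × ℝ, F p.1 p.2 ∂μ2) - 1/4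
        = ∫ p : ℝ × ℝ, (F p.1 p.2 - p.1 * p.2) ∂μ2 := by
      rw [integral_sub hFint2 hUVint2, hEμ2]
    rw [he]
    have hni := norm_integral_le_integral_norm (μ := μ2)
      (fun p : ℝ × ℝ => F p.1 p.2 - p.1 * p.2)
    simp only [Real.norm_eq_abs] at hni
    refine le_trans hni ?_
    have : ∫ p : ℝ × ℝ, |F p.1 p.2 - p.1 * p.2| ∂μ2 ≤ ∫ _p : ℝ × ℝ, k / 4 ∂μ2 := by
      refine integral_mono_ae (hFint2.sub hUVint2).abs (integrable_const _) ?_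
      filter_upwards [hμ2mem] with p hp
      exact hFbd' _ hp.1 _ hp.2
    simpa using this
  -- the key bound on Ω
  have hd2 : |(∫ ω, h ω) - ∫ ω, UX ω * UY ω| ≤ k / 4 := by
    have he : (∫ ω, h ω) - ∫ ω, UX ω * UY ω = ∫ ω, (h ω - UX ω * UY ω) := by
      rw [integral_sub hhint hUVint]
    rw [he]
    have hni := norm_integral_le_integral_norm (μ := (ℙ : Measure Ω))
      (fun ω => h ω - UX ω * UY ω)
    simp only [Real.norm_eq_abs] at hni
    refine le_trans hni ?_
    have : ∫ ω, |h ω - UX ω * UY ω| ≤ ∫ _ω : Ω, k / 4 := by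
      refine integral_mono_ae (hhint.sub hUVint).abs (integrable_const _) ?_
      filter_upwards [haeX, haeY] with ω hx hy
      exact hFbd' _ hx _ hy
    simpa using this
  -- simple bounds on Ω
  have hpos : 0 ≤ ∫ ω, h ω := integral_nonneg fun ω => (hF01 _ _).1
  have hhalf : ∫ ω, h ω ≤ 1/2 := by
    have h1 : ∫ ω, h ω ≤ ∫ ω, (UX ω + UY ω) / 2 := by
      refine integral_mono_ae hhint ((hUXint.add hUYint).div_const 2) ?_
      filter_upwards [haeX, haeY] with ω hx hy
      have := hFle _ hx _ hy
      have := hFle' _ hx _ hy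
      simp only [hh]
      linarith
    have h2 : ∫ ω, (UX ω + UY ω) / 2 = 1/2 := by
      rw [integral_div, integral_add hUXint hUYint, hEX, hEY]
      norm_num
    linarith
  -- combine
  rw [hgint]
  have hA : |(∫ ω, h ω) - 1/4| ≤ k / 2 := by
    have htri := abs_sub_le (∫ ω, h ω) (∫ ω, UX ω * UY ω) (1/4)
    rw [← hIF] at hd1
    linarith [hd1, hd2, htri]
  rw [abs_le] at hA
  constructor
  · exact max_le (by linarith) (by linarith)
  · exact le_min (by linarith) (by linarith)
end

section
/- For any copula C, the Spearman correlation ρ(C) = 12∫₀¹∫₀¹ C(x,y) dx dy − 3 and Kendall tau τ(C) = 4∫∫_{[0,1]²} C(x,y) dC(x,y) − 1 of the partial copula obtained as mixture C = ∫ C_z f(z) dz of a family with D(C_z) ≤ k for all z satisfy the relation ρ/3 − k ≤ τ ≤ ρ/3 + k, where D(C') = 4 sup |C'(x,y) − xy|. -/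
/-!
A function `C` with `KDD C ≤ k` stays within `k / 4` of the independence copula `x * y` on the
unit square. Averaging against a probability density preserves this, so the mixture `C` is
`k / 4`-close to `x * y` on the square, and since `U, V ∈ [0, 1]` almost surely,
`|E[C(U,V)] - E[UV]| ≤ k / 4`. As `τ = 4 E[C(U,V)] - 1` and `ρ / 3 = 4 E[UV] - 1`, this is the claim.
Measurability of `ω ↦ C(U ω, V ω)` comes from `C` being the joint CDF of `(U, V)`.
-/

open MeasureTheory ProbabilityTheory Set

lemma abs_sub_mul_le_of_KDD_le {C : ℝ → ℝ → ℝ} {k : ℝ}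
    (hC : ∀ x ∈ Icc (0:ℝ) 1, ∀ y ∈ Icc (0:ℝ) 1, C x y ∈ Icc (0:ℝ) 1) (hk : KDD C ≤ k)
    {x y : ℝ} (hx : x ∈ Icc (0:ℝ) 1) (hy : y ∈ Icc (0:ℝ) 1) :
    |C x y - x * y| ≤ k / 4 := by
  have hbdd : BddAbove (range fun p : Icc (0:ℝ) 1 × Icc (0:ℝ) 1 =>
      |C p.1 p.2 - (p.1 : ℝ) * (p.2 : ℝ)|) := by
    refine ⟨1, ?_⟩
    rintro _ ⟨⟨⟨a, ha⟩, ⟨b, hb⟩⟩, rfl⟩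
    have hab := hC a ha b hb
    rw [abs_le]
    constructor <;> nlinarith [ha.1, ha.2, hb.1, hb.2, hab.1, hab.2]
  have := le_ciSup hbdd (⟨⟨x, hx⟩, ⟨y, hy⟩⟩ : Icc (0:ℝ) 1 × Icc (0:ℝ) 1)
  unfold KDD at hk
  linarith

lemma abs_integral_mul_density_sub_le {α : Type*} [MeasurableSpace α] {μ : Measure α}
    {a f : α → ℝ} {c ε : ℝ} (ha : AEStronglyMeasurable a μ) (hf0 : ∀ z, 0 ≤ f z)
    (hf1 : ∫ z, f z ∂μ = 1) (h : ∀ z, |a z - c| ≤ ε) :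
    |∫ z, a z * f z ∂μ - c| ≤ ε := by
  have hf : Integrable f μ := .of_integral_ne_zero (by simp [hf1])
  have haf : Integrable (fun z => a z * f z) μ :=
    hf.bdd_mul ha (c := |c| + ε) <| .of_forall fun z => by
      rw [Real.norm_eq_abs]
      linarith [abs_sub_abs_le_abs_sub (a z) c, h z]
  have hdev : ∫ z, (a z - c) * f z ∂μ = ∫ z, a z * f z ∂μ - c := by
    simp only [sub_mul]
    rw [integral_sub haf (hf.const_mul c), integral_const_mul, hf1, mul_one]
  calc |∫ z, a z * f z ∂μ - c| = |∫ z, (a z - c) * f z ∂μ| := by rw [hdev]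
    _ ≤ ∫ z, |(a z - c) * f z| ∂μ := abs_integral_le_integral_abs
    _ ≤ ∫ z, ε * f z ∂μ := by
        refine integral_mono_of_nonneg (.of_forall fun z => abs_nonneg _) (hf.const_mul ε)
          (.of_forall fun z => ?_)
        dsimp only
        rw [abs_mul, abs_of_nonneg (hf0 z)]
        exact mul_le_mul_of_nonneg_right (h z) (hf0 z)
    _ = ε := by rw [integral_const_mul, hf1, mul_one]

lemma ae_mem_of_map_eq_restrict {Ω β : Type*} [MeasurableSpace Ω] [MeasurableSpace β]
    {μ : Measure Ω} {ν : Measure β} {X : Ω → β} {s : Set β} (hX : AEMeasurable X μ)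
    (hs : MeasurableSet s) (h : μ.map X = ν.restrict s) :
    ∀ᵐ ω ∂μ, X ω ∈ s :=
  ae_of_ae_map hX (h ▸ ae_restrict_mem hs)

lemma measurable_measure_le_and_le {Ω : Type*} [MeasurableSpace Ω] {μ : Measure Ω} [SFinite μ]
    {U V : Ω → ℝ} (hU : Measurable U) (hV : Measurable V) :
    Measurable fun p : ℝ × ℝ => μ {ω | U ω ≤ p.1 ∧ V ω ≤ p.2} :=
  measurable_measure_prodMk_left (s := {q : (ℝ × ℝ) × Ω | U q.2 ≤ q.1.1 ∧ V q.2 ≤ q.1.2})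
    ((measurableSet_le (hU.comp measurable_snd) (measurable_fst.comp measurable_fst)).inter
      (measurableSet_le (hV.comp measurable_snd) (measurable_snd.comp measurable_fst)))

lemma abs_integral_sub_le_of_ae_abs_sub_le {Ω : Type*} [MeasurableSpace Ω] {μ : Measure Ω}
    [IsProbabilityMeasure μ] {X Y : Ω → ℝ} {ε : ℝ} (hX : AEStronglyMeasurable X μ)
    (hY : Integrable Y μ) (h : ∀ᵐ ω ∂μ, |X ω - Y ω| ≤ ε) :
    |∫ ω, X ω ∂μ - ∫ ω, Y ω ∂μ| ≤ ε := by
  have hXY : Integrable (fun ω => X ω - Y ω) μ := .of_bound (hX.sub hY.1) ε h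
  have hXi : Integrable X μ := (hXY.add hY).congr (.of_forall fun ω => sub_add_cancel _ _)
  rw [← integral_sub hXi hY]
  simpa using norm_integral_le_of_norm_le_const (f := fun ω => X ω - Y ω) h

theorem kendall_spearman_relation_mixture_general
    {Ω : Type*} [MeasureSpace Ω] [IsProbabilityMeasure (ℙ : Measure Ω)]
    (Cz : ℝ → ℝ → ℝ → ℝ)  -- the family of copulas (C_z)
    (fz : ℝ → ℝ)           -- probability density on ℝ
    (hf0 : ∀ z, 0 ≤ fz z) (hf1 : ∫ z, fz z = 1)
    (hCbd : ∀ z, ∀ x ∈ Icc (0:ℝ) 1, ∀ y ∈ Icc (0:ℝ) 1, Cz z x y ∈ Icc (0:ℝ) 1)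
    (hCmeas : ∀ x ∈ Icc (0:ℝ) 1, ∀ y ∈ Icc (0:ℝ) 1, Measurable fun z => Cz z x y)
    (k : ℝ) (hk : ∀ z, KDD (Cz z) ≤ k)
    (U V : Ω → ℝ) (hU : Measurable U) (hV : Measurable V)
    -- (U,V) has joint CDF equal to the mixture copula:
    (hUV : ∀ x ∈ Icc (0:ℝ) 1, ∀ y ∈ Icc (0:ℝ) 1,
      (ℙ {ω | U ω ≤ x ∧ V ω ≤ y}).toReal = ∫ z, Cz z x y * fz z)
    (hUuni : (ℙ : Measure Ω).map U = volume.restrict (Icc (0:ℝ) 1))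
    (hVuni : (ℙ : Measure Ω).map V = volume.restrict (Icc (0:ℝ) 1)) :
    (12 * (∫ ω, U ω * V ω) - 3) / 3 - k
        ≤ 4 * (∫ ω, (∫ z, Cz z (U ω) (V ω) * fz z)) - 1
    ∧ 4 * (∫ ω, (∫ z, Cz z (U ω) (V ω) * fz z)) - 1
        ≤ (12 * (∫ ω, U ω * V ω) - 3) / 3 + k := by
  set C : ℝ → ℝ → ℝ := fun x y => ∫ z, Cz z x y * fz z
  have hC : ∀ x ∈ Icc (0:ℝ) 1, ∀ y ∈ Icc (0:ℝ) 1, |C x y - x * y| ≤ k / 4 := fun x hx y hy =>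
    abs_integral_mul_density_sub_le (hCmeas x hx y hy).aestronglyMeasurable hf0 hf1
      fun z => abs_sub_mul_le_of_KDD_le (hCbd z) (hk z) hx hy
  have hUV01 : ∀ᵐ ω, U ω ∈ Icc (0:ℝ) 1 ∧ V ω ∈ Icc (0:ℝ) 1 :=
    (ae_mem_of_map_eq_restrict hU.aemeasurable measurableSet_Icc hUuni).and
      (ae_mem_of_map_eq_restrict hV.aemeasurable measurableSet_Icc hVuni)
  have hCUV : AEStronglyMeasurable (fun ω => C (U ω) (V ω)) ℙ :=
    ((measurable_measure_le_and_le hU hV).comp (hU.prodMk hV)).ennreal_toReal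
      |>.aestronglyMeasurable.congr <| by
        filter_upwards [hUV01] with ω hω using hUV _ hω.1 _ hω.2
  have hUVint : Integrable (fun ω => U ω * V ω) ℙ :=
    .of_bound (hU.mul hV).aestronglyMeasurable 1 <| by
      filter_upwards [hUV01] with ω ⟨hu, hv⟩
      rw [Real.norm_eq_abs, abs_of_nonneg (mul_nonneg hu.1 hv.1)]
      exact mul_le_one₀ hu.2 hv.1 hv.2
  have hmean := abs_integral_sub_le_of_ae_abs_sub_le hCUV hUVint <| by
    filter_upwards [hUV01] with ω hω using hC _ hω.1 _ hω.2
  rw [abs_le] at hmean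
  constructor <;> linarith [hmean.1, hmean.2]

/-- For the mixture copula `C = ∫ C_z f(z) dz` of a family with `D(C_z) ≤ k` for all `z`,
Kendall's tau `τ(C) = 4 E[C(U,V)] - 1` and Spearman's rho `ρ(C) = 12 E[UV] - 3`
(where `(U,V)` has joint CDF `C`) satisfy `ρ/3 - k ≤ τ ≤ ρ/3 + k`. -/
theorem kendall_spearman_relation_mixture
    {Ω : Type*} [MeasureSpace Ω] [IsProbabilityMeasure (ℙ : Measure Ω)]
    (Cz : ℝ → ℝ → ℝ → ℝ)  -- the family of copulas (C_z)
    (fz : ℝ → ℝ)           -- probability density on ℝ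
    (hf0 : ∀ z, 0 ≤ fz z) (hfi : Integrable fz) (hf1 : ∫ z, fz z = 1)
    (hCbd : ∀ z, ∀ x ∈ Icc (0:ℝ) 1, ∀ y ∈ Icc (0:ℝ) 1, Cz z x y ∈ Icc (0:ℝ) 1)
    (hCmeas : ∀ x ∈ Icc (0:ℝ) 1, ∀ y ∈ Icc (0:ℝ) 1, Measurable fun z => Cz z x y)
    (k : ℝ) (hk : ∀ z, KDD (Cz z) ≤ k)
    (U V : Ω → ℝ) (hU : Measurable U) (hV : Measurable V)
    -- (U,V) has joint CDF equal to the mixture copula: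
    (hUV : ∀ x ∈ Icc (0:ℝ) 1, ∀ y ∈ Icc (0:ℝ) 1,
      (ℙ {ω | U ω ≤ x ∧ V ω ≤ y}).toReal = ∫ z, Cz z x y * fz z)
    (hUuni : (ℙ : Measure Ω).map U = volume.restrict (Icc (0:ℝ) 1))
    (hVuni : (ℙ : Measure Ω).map V = volume.restrict (Icc (0:ℝ) 1)) :
    (12 * (∫ ω, U ω * V ω) - 3) / 3 - k
        ≤ 4 * (∫ ω, (∫ z, Cz z (U ω) (V ω) * fz z)) - 1
    ∧ 4 * (∫ ω, (∫ z, Cz z (U ω) (V ω) * fz z)) - 1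
        ≤ (12 * (∫ ω, U ω * V ω) - 3) / 3 + k :=
  kendall_spearman_relation_mixture_general Cz fz hf0 hf1 hCbd hCmeas k hk U V hU hV hUV hUuni hVuni
end

section
/- Let (X,Y,Z) be an absolutely continuous random vector. Then X and Y are conditionally independent given Z if and only if the Rosenblatt transforms F_{X|Z}(X|Z), F_{Y|Z}(Y|Z) and Z are mutually independent. -/
/-!
Given `Z = z`, the map `(x, y) ↦ (F_{X|Z}(x|z), F_{Y|Z}(y|z))` is a measurable embedding of
`ℝ²` (both coordinates are continuous and strictly increasing) which, by the probability integral
transform, sends the product of the conditional laws of `X` and `Y` to the uniform law on the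
unit square. So the conditional law of `(X, Y)` given `Z` is that product, i.e. `X ⟂ Y | Z`,
iff the conditional law of `(U_X, U_Y)` given `Z = z` is uniform on the square for a.e. `z`,
i.e. iff the law of `(Z, U_X, U_Y)` is `law(Z) ⊗ Unif ⊗ Unif`. As `U_X` and `U_Y` are
themselves uniform, this last condition is the mutual independence of `U_X`, `U_Y` and `Z`.
-/

open MeasureTheory ProbabilityTheory Set Filter

namespace ProbabilityTheory

variable {α β γ δ : Type*} {mα : MeasurableSpace α} {mβ : MeasurableSpace β}
  {mγ : MeasurableSpace γ} {mδ : MeasurableSpace δ}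

lemma Kernel.measurable_cdf (κ : Kernel α ℝ) [IsMarkovKernel κ] :
    Measurable fun p : α × ℝ ↦ cdf (κ p.1) p.2 := by
  simp_rw [cdf_eq_real, measureReal_def]
  exact (Kernel.measurable_kernel_prodMk_left (κ := κ.prodMkRight ℝ)
    (measurableSet_le measurable_snd (measurable_snd.comp measurable_fst))).ennreal_toReal

lemma map_cdf_eq_volume_restrict_Icc {ν : Measure ℝ} [IsProbabilityMeasure ν]
    (hcont : Continuous (cdf ν)) (hmono : StrictMono (cdf ν)) :
    ν.map (cdf ν) = volume.restrict (Icc 0 1) := by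
  set F := cdf ν
  have hpos (x : ℝ) : 0 < F x := (cdf_nonneg ν (x - 1)).trans_lt (hmono (by linarith))
  have hlt (x : ℝ) : F x < 1 := (hmono (lt_add_one x)).trans_le (cdf_le_one ν (x + 1))
  refine Measure.ext_of_Iic _ _ fun u ↦ ?_
  have hvol : volume.restrict (Icc (0 : ℝ) 1) (Iic u) = ENNReal.ofReal (min u 1) := by
    rw [Measure.restrict_apply measurableSet_Iic,
      show Iic u ∩ Icc 0 1 = Icc 0 (min u 1) by
        ext; simp only [mem_inter_iff, mem_Iic, mem_Icc, le_min_iff]; tauto,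
      Real.volume_Icc, sub_zero]
  rw [Measure.map_apply hcont.measurable measurableSet_Iic, hvol]
  rcases le_or_gt u 0 with hu0 | hu0
  · rw [ENNReal.ofReal_of_nonpos (min_le_of_left_le hu0)]
    convert measure_empty (μ := ν)
    exact eq_empty_of_forall_notMem fun x hx ↦ (hpos x).not_ge (le_trans hx hu0)
  rcases le_or_gt 1 u with hu1 | hu1
  · rw [min_eq_right hu1, ENNReal.ofReal_one]
    convert measure_univ (μ := ν)
    exact eq_univ_of_forall fun x ↦ (hlt x).le.trans hu1
  obtain ⟨a, rfl⟩ : u ∈ range F := mem_range_of_exists_le_of_exists_ge hcont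
    ((tendsto_cdf_atBot ν).eventually (eventually_le_nhds hu0)).exists
    ((tendsto_cdf_atTop ν).eventually (eventually_ge_nhds hu1)).exists
  rw [min_eq_left hu1.le, ofReal_cdf]
  congr 1
  ext x
  exact hmono.le_iff_le

lemma _root_.MeasurableEmbedding.eq_prod_iff_map_prodMap_eq {f : α → γ} {g : β → δ}
    (hf : MeasurableEmbedding f) (hg : MeasurableEmbedding g) (η : Measure (α × β))
    (μ : Measure α) (ν : Measure β) [SFinite μ] [SFinite ν] :
    η = μ.prod ν ↔ η.map (Prod.map f g) = (μ.map f).prod (ν.map g) := by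
  rw [Measure.map_prod_map μ ν hf.measurable hg.measurable]
  exact (hf.prodMap hg).map_injective.eq_iff.symm

lemma Kernel.map_id_prod_apply (κ : Kernel α β) [IsSFiniteKernel κ] {g : α × β → γ}
    (hg : Measurable g) (a : α) :
    (Kernel.id ×ₖ κ).map g a = (κ a).map fun b ↦ g (a, b) := by
  rw [Kernel.map_apply _ hg, Kernel.prod_apply, Kernel.id_apply, Measure.dirac_prod,
    Measure.map_map hg measurable_prodMk_left]
  rfl

lemma _root_.MeasureTheory.Measure.compProd_map_id_prod (μ : Measure α) [SFinite μ]
    (κ : Kernel α β) [IsSFiniteKernel κ] {g : α × β → γ} (hg : Measurable g) :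
    μ ⊗ₘ (Kernel.id ×ₖ κ).map g = (μ ⊗ₘ κ).map fun p ↦ (p.1, g p) := by
  ext s hs
  rw [Measure.compProd_apply hs, Measure.map_apply (measurable_fst.prodMk hg) hs,
    Measure.compProd_apply (measurable_fst.prodMk hg hs)]
  refine lintegral_congr fun a ↦ ?_
  rw [Kernel.map_id_prod_apply κ hg, Measure.map_apply (by fun_prop) (measurable_prodMk_left hs)]
  rfl

lemma _root_.MeasureTheory.Measure.map_compProd_eq_prod_iff
    [MeasurableSpace.CountableOrCountablyGenerated α γ] (μ : Measure α) [IsFiniteMeasure μ]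
    (κ : Kernel α β) [IsFiniteKernel κ] {g : α × β → γ} (hg : Measurable g)
    (ν : Measure γ) [IsFiniteMeasure ν] :
    (μ ⊗ₘ κ).map (fun p ↦ (p.1, g p)) = μ.prod ν ↔
      ∀ᵐ a ∂μ, (κ a).map (fun b ↦ g (a, b)) = ν := by
  rw [← Measure.compProd_map_id_prod μ κ hg, ← Measure.compProd_const, Kernel.compProd_eq_iff]
  simp only [EventuallyEq, Kernel.map_id_prod_apply κ hg, Kernel.const_apply]

lemma Kernel.ae_cdf_eq {κ : Kernel α ℝ} [IsMarkovKernel κ] {μ : Measure α} {F : ℝ → α → ℝ}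
    (hF : ∀ᵐ a ∂μ, ∀ x, (κ a (Iic x)).toReal = F x a) :
    ∀ᵐ a ∂μ, ⇑(cdf (κ a)) = fun x ↦ F x a := by
  filter_upwards [hF] with a ha
  ext x
  rw [cdf_eq_real, measureReal_def, ha]

lemma Kernel.ae_eq_prod_iff_map_cdf {μ : Measure α} (κ : Kernel α (ℝ × ℝ))
    (κ₁ κ₂ : Kernel α ℝ) [IsMarkovKernel κ₁] [IsMarkovKernel κ₂]
    (h₁ : ∀ᵐ a ∂μ, Continuous (cdf (κ₁ a)) ∧ StrictMono (cdf (κ₁ a)))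
    (h₂ : ∀ᵐ a ∂μ, Continuous (cdf (κ₂ a)) ∧ StrictMono (cdf (κ₂ a))) :
    κ =ᵐ[μ] κ₁ ×ₖ κ₂ ↔ ∀ᵐ a ∂μ, (κ a).map (Prod.map (cdf (κ₁ a)) (cdf (κ₂ a))) =
      (volume.restrict (Icc 0 1)).prod (volume.restrict (Icc 0 1)) := by
  refine eventually_congr ?_
  filter_upwards [h₁, h₂] with a ⟨hcont₁, hmono₁⟩ ⟨hcont₂, hmono₂⟩
  rw [Kernel.prod_apply, MeasurableEmbedding.eq_prod_iff_map_prodMap_eq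
      (hcont₁.measurableEmbedding hmono₁.injective) (hcont₂.measurableEmbedding hmono₂.injective),
    map_cdf_eq_volume_restrict_Icc hcont₁ hmono₁, map_cdf_eq_volume_restrict_Icc hcont₂ hmono₂]

lemma map_pi_fin_three_eq_prod (ν : Fin 3 → Measure β) [∀ i, IsProbabilityMeasure (ν i)] :
    (Measure.pi ν).map (fun x ↦ (x 2, x 0, x 1)) = (ν 2).prod ((ν 0).prod (ν 1)) := by
  have hm : Measurable fun x : Fin 3 → β ↦ (x 2, x 0, x 1) := by fun_prop
  have := Measure.isProbabilityMeasure_map (μ := Measure.pi ν) hm.aemeasurable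
  refine Measure.ext_prod₃_iff.mpr fun {s t u} hs ht hu ↦ ?_
  have hpre : (fun x : Fin 3 → β ↦ (x 2, x 0, x 1)) ⁻¹' (s ×ˢ t ×ˢ u) = univ.pi ![t, u, s] := by
    ext x
    simp [Fin.forall_fin_succ, and_comm, and_assoc]
  rw [Measure.map_apply hm (hs.prod (ht.prod hu)), hpre, Measure.pi_pi, Fin.prod_univ_three,
    Measure.prod_prod, Measure.prod_prod]
  simp only [Matrix.cons_val_zero, Matrix.cons_val_one, Matrix.cons_val]
  ring

lemma measurableEmbedding_fin_three : MeasurableEmbedding fun x : Fin 3 → β ↦ (x 2, x 0, x 1) :=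
  MeasurableEmbedding.of_measurable_inverse (g := fun p : β × β × β ↦ ![p.2.1, p.2.2, p.1])
    (by fun_prop) (by rw [range_eq_univ.mpr fun p ↦ ⟨![p.2.1, p.2.2, p.1], rfl⟩]; exact .univ)
    (measurable_pi_iff.mpr fun i ↦ by fin_cases i <;> dsimp <;> fun_prop)
    fun x ↦ by ext i; fin_cases i <;> rfl

variable {Ω : Type*} {mΩ : MeasurableSpace Ω} {μ : Measure Ω}

lemma iIndepFun_fin_three_iff [IsProbabilityMeasure μ] {f g h : Ω → β}
    (hf : AEMeasurable f μ) (hg : AEMeasurable g μ) (hh : AEMeasurable h μ) :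
    iIndepFun ![f, g, h] μ ↔
      μ.map (fun ω ↦ (h ω, f ω, g ω)) = (μ.map h).prod ((μ.map f).prod (μ.map g)) := by
  have hmeas : ∀ i, AEMeasurable (![f, g, h] i) μ := by
    simp [Fin.forall_fin_succ, hf, hg, hh]
  have := fun i ↦ Measure.isProbabilityMeasure_map (hmeas i)
  rw [iIndepFun_iff_map_fun_eq_pi_map hmeas, ← measurableEmbedding_fin_three.map_injective.eq_iff,
    map_pi_fin_three_eq_prod, AEMeasurable.map_map_of_aemeasurable (by fun_prop)
      (aemeasurable_pi_iff.mpr hmeas)]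
  rfl

lemma condIndepFun_iff_condDistrib_prod_ae_eq_prod [StandardBorelSpace Ω] [IsFiniteMeasure μ]
    [StandardBorelSpace β] [Nonempty β] [StandardBorelSpace γ] [Nonempty γ]
    {f : Ω → β} {g : Ω → γ} {k : Ω → α} (hf : Measurable f) (hg : Measurable g)
    (hk : Measurable k) :
    CondIndepFun (mα.comap k) hk.comap_le f g μ ↔
      condDistrib (fun ω ↦ (f ω, g ω)) k μ =ᵐ[μ.map k] condDistrib f k μ ×ₖ condDistrib g k μ := by
  rw [condIndepFun_iff_map_prod_eq_prod_condDistrib_prod_condDistrib hf hg hk,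
    ← Measure.compProd_eq_comp_prod,
    condDistrib_ae_eq_iff_measure_eq_compProd k (hf.prodMk hg).aemeasurable]

/-- The Rosenblatt transform `F_{W|Z}(W|Z)`. -/
noncomputable def rosenblatt (W Z : Ω → ℝ) (μ : Measure Ω) [IsFiniteMeasure μ] (ω : Ω) : ℝ :=
  cdf (condDistrib W Z μ (Z ω)) (W ω)

lemma rosenblatt_ae_eq [IsFiniteMeasure μ] {W Z : Ω → ℝ} (hZ : Measurable Z) {F : ℝ → ℝ → ℝ}
    (hF : ∀ᵐ z ∂μ.map Z, ∀ x, (condDistrib W Z μ z (Iic x)).toReal = F x z) :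
    rosenblatt W Z μ =ᵐ[μ] fun ω ↦ F (W ω) (Z ω) := by
  filter_upwards [ae_of_ae_map hZ.aemeasurable (Kernel.ae_cdf_eq hF)] with ω hω
  rw [rosenblatt, hω]

lemma measurable_rosenblatt [IsFiniteMeasure μ] {W Z : Ω → ℝ} (hW : Measurable W)
    (hZ : Measurable Z) :
    Measurable (rosenblatt W Z μ) :=
  (Kernel.measurable_cdf _).comp (hZ.prodMk hW)

lemma map_rosenblatt [IsProbabilityMeasure μ] {W Z : Ω → ℝ} (hW : Measurable W)
    (hZ : Measurable Z) (hreg : ∀ᵐ z ∂μ.map Z, Continuous (cdf (condDistrib W Z μ z)) ∧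
      StrictMono (cdf (condDistrib W Z μ z))) :
    μ.map (rosenblatt W Z μ) = volume.restrict (Icc 0 1) := by
  have hjoint : μ.map (fun ω ↦ (Z ω, rosenblatt W Z μ ω)) =
      (μ.map Z).prod (volume.restrict (Icc 0 1)) := by
    rw [← (Measure.map_compProd_eq_prod_iff _ _ (Kernel.measurable_cdf _) _).mpr
        (hreg.mono fun z hz ↦ map_cdf_eq_volume_restrict_Icc hz.1 hz.2),
      compProd_map_condDistrib hW.aemeasurable,
      Measure.map_map (measurable_fst.prodMk (Kernel.measurable_cdf _)) (hZ.prodMk hW)]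
    rfl
  have := Measure.isProbabilityMeasure_map (μ := μ) hZ.aemeasurable
  rw [← Measure.snd_prod (μ := μ.map Z) (ν := volume.restrict (Icc 0 1)), ← hjoint, Measure.snd,
    Measure.map_map measurable_snd (hZ.prodMk (measurable_rosenblatt hW hZ))]
  rfl

lemma condIndepFun_iff_map_rosenblatt_eq_prod [StandardBorelSpace Ω] [IsFiniteMeasure μ]
    {X Y Z : Ω → ℝ} (hX : Measurable X) (hY : Measurable Y) (hZ : Measurable Z)
    (hregX : ∀ᵐ z ∂μ.map Z, Continuous (cdf (condDistrib X Z μ z)) ∧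
      StrictMono (cdf (condDistrib X Z μ z)))
    (hregY : ∀ᵐ z ∂μ.map Z, Continuous (cdf (condDistrib Y Z μ z)) ∧
      StrictMono (cdf (condDistrib Y Z μ z))) :
    CondIndepFun (MeasurableSpace.comap Z inferInstance) hZ.comap_le X Y μ ↔
      μ.map (fun ω ↦ (Z ω, rosenblatt X Z μ ω, rosenblatt Y Z μ ω)) =
        (μ.map Z).prod ((volume.restrict (Icc 0 1)).prod (volume.restrict (Icc 0 1))) := by
  have hG : Measurable fun p : ℝ × ℝ × ℝ ↦
      (cdf (condDistrib X Z μ p.1) p.2.1, cdf (condDistrib Y Z μ p.1) p.2.2) :=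
    ((Kernel.measurable_cdf _).comp (measurable_fst.prodMk measurable_snd.fst)).prodMk
      ((Kernel.measurable_cdf _).comp (measurable_fst.prodMk measurable_snd.snd))
  rw [condIndepFun_iff_condDistrib_prod_ae_eq_prod hX hY hZ,
    Kernel.ae_eq_prod_iff_map_cdf _ _ _ hregX hregY]
  refine (Measure.map_compProd_eq_prod_iff _ _ hG _).symm.trans ?_
  rw [compProd_map_condDistrib (hX.prodMk hY).aemeasurable,
    Measure.map_map (measurable_fst.prodMk hG) (hZ.prodMk (hX.prodMk hY))]
  rfl

end ProbabilityTheory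

open ProbabilityTheory

theorem condIndep_iff_rosenblatt_mutually_indep_general
    {Ω : Type*} [MeasureSpace Ω] [StandardBorelSpace Ω]
    [IsProbabilityMeasure (ℙ : Measure Ω)]
    (X Y Z : Ω → ℝ) (hX : Measurable X) (hY : Measurable Y) (hZ : Measurable Z)
    (FXZ FYZ : ℝ → ℝ → ℝ)
    (hFXZ : ∀ z, Continuous (fun x => FXZ x z) ∧ StrictMono (fun x => FXZ x z))
    (hFYZ : ∀ z, Continuous (fun y => FYZ y z) ∧ StrictMono (fun y => FYZ y z))
    -- FXZ and FYZ are the conditional CDFs of X and Y given Z: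
    (hFXZcond : ∀ᵐ z ∂((ℙ : Measure Ω).map Z),
      ∀ x : ℝ, ((condDistrib X Z ℙ z) (Iic x)).toReal = FXZ x z)
    (hFYZcond : ∀ᵐ z ∂((ℙ : Measure Ω).map Z),
      ∀ y : ℝ, ((condDistrib Y Z ℙ z) (Iic y)).toReal = FYZ y z) :
    CondIndepFun (MeasurableSpace.comap Z inferInstance) (hZ.comap_le) X Y ℙ
      ↔ iIndepFun (m := fun _ => (inferInstance : MeasurableSpace ℝ))
          ![fun ω => FXZ (X ω) (Z ω), fun ω => FYZ (Y ω) (Z ω), Z] ℙ := by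
  have hregX := (Kernel.ae_cdf_eq hFXZcond).mono fun z hz ↦ hz ▸ hFXZ z
  have hregY := (Kernel.ae_cdf_eq hFYZcond).mono fun z hz ↦ hz ▸ hFYZ z
  have hU := rosenblatt_ae_eq hZ hFXZcond
  have hV := rosenblatt_ae_eq hZ hFYZcond
  have hlaw : (ℙ : Measure Ω).map (fun ω ↦ (Z ω, FXZ (X ω) (Z ω), FYZ (Y ω) (Z ω))) =
      (ℙ : Measure Ω).map (fun ω ↦ (Z ω, rosenblatt X Z ℙ ω, rosenblatt Y Z ℙ ω)) :=
    Measure.map_congr (by filter_upwards [hU, hV] with ω hUω hVω; rw [hUω, hVω])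
  rw [condIndepFun_iff_map_rosenblatt_eq_prod hX hY hZ hregX hregY,
    iIndepFun_fin_three_iff ((measurable_rosenblatt hX hZ).aemeasurable.congr hU)
      ((measurable_rosenblatt hY hZ).aemeasurable.congr hV) hZ.aemeasurable,
    hlaw, ← Measure.map_congr hU, ← Measure.map_congr hV, map_rosenblatt hX hZ hregX,
    map_rosenblatt hY hZ hregY]

/-- **Rosenblatt transforms and conditional independence.** Let `(X,Y,Z)` be an
absolutely continuous random vector with conditional CDFs `FXZ x z = F_{X|Z}(x|z)` and
`FYZ y z = F_{Y|Z}(y|z)` (continuous and strictly increasing in their first argument).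
Then `X` and `Y` are conditionally independent given `Z` if and only if the Rosenblatt
transforms `F_{X|Z}(X|Z)`, `F_{Y|Z}(Y|Z)` and `Z` are mutually independent. -/
theorem condIndep_iff_rosenblatt_mutually_indep
    {Ω : Type*} [MeasureSpace Ω] [StandardBorelSpace Ω] [Nonempty Ω]
    [IsProbabilityMeasure (ℙ : Measure Ω)]
    (X Y Z : Ω → ℝ) (hX : Measurable X) (hY : Measurable Y) (hZ : Measurable Z)
    (FXZ FYZ : ℝ → ℝ → ℝ)
    (hFXZ : ∀ z, Continuous (fun x => FXZ x z) ∧ StrictMono (fun x => FXZ x z))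
    (hFYZ : ∀ z, Continuous (fun y => FYZ y z) ∧ StrictMono (fun y => FYZ y z))
    -- FXZ and FYZ are the conditional CDFs of X and Y given Z:
    (hFXZcond : ∀ᵐ z ∂((ℙ : Measure Ω).map Z),
      ∀ x : ℝ, ((condDistrib X Z ℙ z) (Iic x)).toReal = FXZ x z)
    (hFYZcond : ∀ᵐ z ∂((ℙ : Measure Ω).map Z),
      ∀ y : ℝ, ((condDistrib Y Z ℙ z) (Iic y)).toReal = FYZ y z)
    (hUX : Measurable fun ω => FXZ (X ω) (Z ω))
    (hUY : Measurable fun ω => FYZ (Y ω) (Z ω)) :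
    CondIndepFun (MeasurableSpace.comap Z inferInstance) (hZ.comap_le) X Y ℙ
      ↔ iIndepFun (m := fun _ => (inferInstance : MeasurableSpace ℝ))
          ![fun ω => FXZ (X ω) (Z ω), fun ω => FYZ (Y ω) (Z ω), Z] ℙ :=
  condIndep_iff_rosenblatt_mutually_indep_general X Y Z hX hY hZ FXZ FYZ hFXZ hFYZ hFXZcond hFYZcond
end
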